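/- Let β be a positive integer and let B = {(n_1,…,n_d,i) ∈ N^{d+1} : n_1 + ⋯ + n_d ≤ iβ}. Then B is a subsemigroup of N^{d+1} generated by B ∩ (N^d × {1}). -/

import Mathlib

/-!
A point `(n, i + 1)` of `B` splits off a degree-one point `(m, 1)` of `B` with `m ≤ n` and
`∑ m = min β (∑ n)`: the remainder `(n - m, i)` satisfies `∑ (n - m) ≤ i β` and so lies in `B`.
Induction on the last coordinate then writes every point of degree `i` as a sum of `i` points of
degree one, the base case being that `(n, 0) ∈ B` forces `n = 0`.
-/

open Finset

variable {ι : Type*} [Fintype ι]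

lemma exists_le_sum_eq (n : ι → ℕ) {k : ℕ} (hk : k ≤ ∑ i, n i) :
    ∃ m ≤ n, ∑ i, m i = k := by
  classical
  induction k with
  | zero => exact ⟨0, fun _ ↦ Nat.zero_le _, by simp⟩
  | succ k ih =>
    obtain ⟨m, hmn, hm⟩ := ih (by omega)
    obtain ⟨j, hj⟩ : ∃ j, m j < n j := by
      by_contra! h
      have : ∑ i, n i ≤ ∑ i, m i := sum_le_sum fun i _ ↦ h i
      omega
    refine ⟨m + Pi.single j 1, fun i ↦ ?_, by simp [sum_add_distrib, hm]⟩
    rcases eq_or_ne i j with rfl | hij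
    · simpa using hj
    · simpa [hij] using hmn i

variable (ι) in
def sumLeMulSubmonoid (β : ℕ) : AddSubmonoid ((ι → ℕ) × ℕ) where
  carrier := {p | ∑ i, p.1 i ≤ p.2 * β}
  add_mem' {p q} hp hq := by
    simp only [Set.mem_ofPred_eq, Prod.fst_add, Prod.snd_add, Pi.add_apply, sum_add_distrib,
      add_mul] at *
    omega
  zero_mem' := by simp

variable {β : ℕ}

lemma mem_sumLeMulSubmonoid {p : (ι → ℕ) × ℕ} :
    p ∈ sumLeMulSubmonoid ι β ↔ ∑ i, p.1 i ≤ p.2 * β :=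
  Iff.rfl

lemma eq_zero_of_mk_zero_mem_sumLeMulSubmonoid {n : ι → ℕ}
    (h : (n, 0) ∈ sumLeMulSubmonoid ι β) : n = 0 := by
  rw [mem_sumLeMulSubmonoid, zero_mul, Nat.le_zero, sum_eq_zero_iff] at h
  exact funext fun i ↦ h i (mem_univ i)

lemma exists_degree_one_add_of_mk_succ_mem_sumLeMulSubmonoid {n : ι → ℕ} {i : ℕ}
    (h : (n, i + 1) ∈ sumLeMulSubmonoid ι β) :
    ∃ m ≤ n, (m, 1) ∈ sumLeMulSubmonoid ι β ∧ (n - m, i) ∈ sumLeMulSubmonoid ι β := by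
  obtain ⟨m, hmn, hm⟩ := exists_le_sum_eq n (min_le_right β (∑ j, n j))
  refine ⟨m, hmn, ?_, ?_⟩
  · simp only [mem_sumLeMulSubmonoid, hm, one_mul, min_le_left]
  · have hsum : ∑ j, (n - m) j = ∑ j, n j - min β (∑ j, n j) := by
      rw [← hm, ← sum_tsub_distrib _ fun j _ ↦ hmn j]
      rfl
    change ∑ j, n j ≤ (i + 1) * β at h
    change ∑ j, (n - m) j ≤ i * β
    rw [add_one_mul] at h
    omega

theorem sumLeMulSubmonoid_eq_closure :
    sumLeMulSubmonoid ι β =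
      AddSubmonoid.closure {p | p ∈ sumLeMulSubmonoid ι β ∧ p.2 = 1} := by
  refine le_antisymm (fun p hp ↦ ?_) (AddSubmonoid.closure_le.2 fun p hp ↦ hp.1)
  obtain ⟨n, i⟩ := p
  induction i generalizing n with
  | zero =>
    rw [eq_zero_of_mk_zero_mem_sumLeMulSubmonoid hp]
    exact zero_mem _
  | succ i ih =>
    obtain ⟨m, hmn, hm, hrest⟩ := exists_degree_one_add_of_mk_succ_mem_sumLeMulSubmonoid hp
    have hsplit : ((n, i + 1) : (ι → ℕ) × ℕ) = (n - m, i) + (m, 1) := by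
      simp [tsub_add_cancel_of_le hmn]
    rw [hsplit]
    exact add_mem (ih _ hrest) (AddSubmonoid.subset_closure ⟨hm, rfl⟩)

theorem semigroup_B_generated_in_degree_one_general (d β : ℕ)
    (B : Set ((Fin d → ℕ) × ℕ)) (hB : B = {p | ∑ i, p.1 i ≤ p.2 * β}) :
    (∀ x y : (Fin d → ℕ) × ℕ, x ∈ B → y ∈ B → x + y ∈ B) ∧
    B = (AddSubmonoid.closure {p : (Fin d → ℕ) × ℕ | p ∈ B ∧ p.2 = 1} :
      Set ((Fin d → ℕ) × ℕ)) := by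
  obtain rfl : B = sumLeMulSubmonoid (Fin d) β := hB
  exact ⟨fun _ _ ↦ add_mem, congrArg SetLike.coe sumLeMulSubmonoid_eq_closure⟩

theorem semigroup_B_generated_in_degree_one (d β : ℕ) (hβ : 0 < β)
    (B : Set ((Fin d → ℕ) × ℕ)) (hB : B = {p | ∑ i, p.1 i ≤ p.2 * β}) :
    (∀ x y : (Fin d → ℕ) × ℕ, x ∈ B → y ∈ B → x + y ∈ B) ∧
    B = (AddSubmonoid.closure {p : (Fin d → ℕ) × ℕ | p ∈ B ∧ p.2 = 1} :
      Set ((Fin d → ℕ) × ℕ)) :=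
  semigroup_B_generated_in_degree_one_general d β B hB
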